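/- arXiv:1409.8510 — 3 statements merged into one kernel-verified Lean document; each statement's English description precedes it below -/
import Mathlib

section
/- Suppose f₁, f₂, g₁, g₂ are integer polynomials with f₁(0) ≠ 0 and f₂(0) ≠ 0, f₁ and f₂ coprime, and (f₁(x)/f₂(x))^n = g₁(x^k)/g₂(x^k) as rational functions for positive integers n and k. Then there exist integer polynomials h₁, h₂ such that f₁(x)/f₂(x) = h₁(x^k)/h₂(x^k). -/
/-!
Map everything to `ℂ[X]` and let `σ` be the substitution `x ↦ ζx` for a primitive `k`-th root
of unity `ζ`. It fixes `g₁(x^k)` and `g₂(x^k)`, so applying it to `f₁^n g₂(x^k) = f₂^n g₁(x^k)`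
gives `(σf₁ · f₂)^n = (σf₂ · f₁)^n`. Taking `n`-th roots in the integrally closed `ℂ[X]` and
comparing values at `0` gives `σf₁ · f₂ = σf₂ · f₁`; coprimality then forces `σfᵢ = fᵢ`.
Comparing coefficients, `ζ^i = 1`, i.e. `k ∣ i`, for every exponent `i` occurring in `fᵢ`.
-/

open Polynomial

theorem associated_of_mul_eq_of_isCoprime {R : Type*} [CommRing R] [IsDomain R] {a b c d : R}
    (hab : IsCoprime a b) (hcd : IsCoprime c d) (h : c * b = d * a) : Associated a c :=
  associated_of_dvd_dvd (hab.dvd_of_dvd_mul_right ⟨d, by rw [h, mul_comm]⟩)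
    (hcd.dvd_of_dvd_mul_right ⟨b, by rw [mul_comm, ← h]⟩)

theorem mul_pow_eq_of_map_eq {R : Type*} [CommRing R] [IsDomain R] (σ : R →+* R)
    {a b c d : R} {n : ℕ} (hc : σ c = c) (hd : σ d = d) (hd0 : d ≠ 0)
    (h : a ^ n * d = b ^ n * c) : (σ a * b) ^ n = (σ b * a) ^ n := by
  have hσ : σ a ^ n * d = σ b ^ n * c := by
    rw [← hc, ← hd, ← map_pow, ← map_pow, ← map_mul, ← map_mul, h]
  refine mul_right_cancel₀ hd0 ?_
  calc (σ a * b) ^ n * d = b ^ n * (σ a ^ n * d) := by ring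
    _ = σ b ^ n * (b ^ n * c) := by rw [hσ]; ring
    _ = (σ b * a) ^ n * d := by rw [← h]; ring

namespace Polynomial

theorem expand_contract_of_dvd {R : Type*} [CommSemiring R] {f : R[X]} {k : ℕ} (hk : k ≠ 0)
    (h : ∀ i, f.coeff i ≠ 0 → k ∣ i) : expand R k (contract k f) = f := by
  ext i
  rw [coeff_expand (Nat.pos_of_ne_zero hk)]
  split_ifs with hki
  · rw [coeff_contract hk, Nat.div_mul_cancel hki]
  · exact (not_imp_comm.mp (h i) hki).symm

theorem dvd_of_comp_C_mul_X_eq_self {R : Type*} [CommRing R] [IsDomain R] {ζ : R} {k : ℕ}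
    (hζ : IsPrimitiveRoot ζ k) {p : R[X]} (hp : p.comp (C ζ * X) = p) {i : ℕ}
    (hi : p.coeff i ≠ 0) : k ∣ i := by
  have hcoeff : p.coeff i * ζ ^ i = p.coeff i * 1 := by
    rw [← comp_C_mul_X_coeff, hp, mul_one]
  exact hζ.dvd_of_pow_eq_one i (mul_left_cancel₀ hi hcoeff)

theorem exists_eq_comp_X_pow_of_map_comp_C_mul_X_eq {R K : Type*} [CommRing R] [CommRing K]
    [IsDomain K] {φ : R →+* K} (hφ : Function.Injective φ) {ζ : K} {k : ℕ}
    (hζ : IsPrimitiveRoot ζ k) (hk : k ≠ 0) {f : R[X]}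
    (h : (f.map φ).comp (C ζ * X) = f.map φ) : ∃ g : R[X], f = g.comp (X ^ k) := by
  refine ⟨contract k f, (expand_contract_of_dvd hk fun i hi => ?_).symm⟩
  refine dvd_of_comp_C_mul_X_eq_self hζ h ?_
  rwa [coeff_map, map_ne_zero_iff φ hφ]

theorem comp_X_pow_comp_C_mul_X {R : Type*} [CommSemiring R] {ζ : R} {k : ℕ} (hζ : ζ ^ k = 1)
    (p : R[X]) : (p.comp (X ^ k)).comp (C ζ * X) = p.comp (X ^ k) := by
  rw [comp_assoc, X_pow_comp, mul_pow, ← C_pow, hζ, C_1, one_mul]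

theorem eq_of_associated_of_eval_zero {R : Type*} [CommRing R] [IsDomain R] {p q : R[X]}
    (h : Associated p q) (heval : p.eval 0 = q.eval 0) (hp : p.eval 0 ≠ 0) : p = q := by
  obtain ⟨u, rfl⟩ := h
  obtain ⟨r, -, hr⟩ := Polynomial.isUnit_iff.mp u.isUnit
  have hr1 : r = 1 := by
    rw [← hr, eval_mul, eval_C] at heval
    exact mul_left_cancel₀ hp (by rw [mul_one, ← heval])
  rw [← hr, hr1, C_1, mul_one]

theorem comp_C_mul_X_eq_self_of_pow_eq {K : Type*} [Field K] {F₁ F₂ : K[X]} {ζ : K} {n : ℕ}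
    (hn : n ≠ 0) (hcop : IsCoprime F₁ F₂) (hF₁ : F₁.eval 0 ≠ 0) (hF₂ : F₂.eval 0 ≠ 0)
    (h : (F₁.comp (C ζ * X) * F₂) ^ n = (F₂.comp (C ζ * X) * F₁) ^ n) :
    F₁.comp (C ζ * X) = F₁ ∧ F₂.comp (C ζ * X) = F₂ := by
  have heval (p : K[X]) : (p.comp (C ζ * X)).eval 0 = p.eval 0 := by simp [eval_comp]
  have hassoc : Associated (F₁.comp (C ζ * X) * F₂) (F₂.comp (C ζ * X) * F₁) :=
    associated_of_dvd_dvd ((IsIntegrallyClosed.pow_dvd_pow_iff hn).mp h.dvd)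
      ((IsIntegrallyClosed.pow_dvd_pow_iff hn).mp h.symm.dvd)
  have hmul : F₁.comp (C ζ * X) * F₂ = F₂.comp (C ζ * X) * F₁ :=
    eq_of_associated_of_eval_zero hassoc (by rw [eval_mul, eval_mul, heval, heval, mul_comm])
      (by simpa [heval] using And.intro hF₁ hF₂)
  have hcopσ : IsCoprime (F₁.comp (C ζ * X)) (F₂.comp (C ζ * X)) :=
    hcop.map (compRingHom (C ζ * X))
  constructor
  · refine (eq_of_associated_of_eval_zero ?_ (heval F₁).symm hF₁).symm
    exact associated_of_mul_eq_of_isCoprime hcop hcopσ hmul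
  · refine (eq_of_associated_of_eval_zero ?_ (heval F₂).symm hF₂).symm
    exact associated_of_mul_eq_of_isCoprime hcop.symm hcopσ.symm hmul.symm

end Polynomial

theorem stmt_2_general (f₁ f₂ g₁ g₂ : Polynomial ℤ) (n k : ℕ) (hn : 0 < n) (hk : 0 < k)
    (hf₁0 : f₁.eval 0 ≠ 0) (hf₂0 : f₂.eval 0 ≠ 0)
    (hcop : IsCoprime f₁ f₂) (hg₂ : g₂ ≠ 0)
    (heq : f₁ ^ n * g₂.comp (X ^ k) = f₂ ^ n * g₁.comp (X ^ k)) :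
    ∃ h₁ h₂ : Polynomial ℤ, f₁ = h₁.comp (X ^ k) ∧ f₂ = h₂.comp (X ^ k) := by
  obtain ⟨ζ, hζ⟩ : ∃ ζ : ℂ, IsPrimitiveRoot ζ k := ⟨_, Complex.isPrimitiveRoot_exp k hk.ne'⟩
  set c := Int.castRingHom ℂ
  have hc : Function.Injective c := Int.cast_injective
  have hfix (g : ℤ[X]) :
      compRingHom (C ζ * X) ((g.comp (X ^ k)).map c) = (g.comp (X ^ k)).map c := by
    simp only [coe_compRingHom_apply, map_comp, Polynomial.map_pow, map_X]
    exact comp_X_pow_comp_C_mul_X hζ.pow_eq_one _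
  have hg₂k : (g₂.comp (X ^ k)).map c ≠ 0 := by
    rw [Ne, Polynomial.map_eq_zero_iff hc, ← expand_eq_comp_X_pow]
    exact (expand_ne_zero hk).mpr hg₂
  have hpow := mul_pow_eq_of_map_eq _ (hfix g₁) (hfix g₂) hg₂k
    (by simpa only [Polynomial.map_mul, Polynomial.map_pow] using congrArg (map c) heq)
  have heval (f : ℤ[X]) (hf : f.eval 0 ≠ 0) : (f.map c).eval 0 ≠ 0 := by
    rwa [eval_zero_map, map_ne_zero_iff c hc]
  obtain ⟨hσ₁, hσ₂⟩ := comp_C_mul_X_eq_self_of_pow_eq hn.ne' (hcop.map (mapRingHom c))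
    (heval f₁ hf₁0) (heval f₂ hf₂0) hpow
  obtain ⟨h₁, rfl⟩ := exists_eq_comp_X_pow_of_map_comp_C_mul_X_eq hc hζ hk.ne' hσ₁
  obtain ⟨h₂, rfl⟩ := exists_eq_comp_X_pow_of_map_comp_C_mul_X_eq hc hζ hk.ne' hσ₂
  exact ⟨h₁, h₂, rfl, rfl⟩

theorem stmt_2 (f₁ f₂ g₁ g₂ : Polynomial ℤ) (n k : ℕ) (hn : 0 < n) (hk : 0 < k)
    (hf₁0 : f₁.eval 0 ≠ 0) (hf₂0 : f₂.eval 0 ≠ 0)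
    (hcop : IsCoprime f₁ f₂) (hf₂ : f₂ ≠ 0) (hg₂ : g₂ ≠ 0)
    (heq : f₁ ^ n * g₂.comp (X ^ k) = f₂ ^ n * g₁.comp (X ^ k)) :
    ∃ h₁ h₂ : Polynomial ℤ, f₁ = h₁.comp (X ^ k) ∧ f₂ = h₂.comp (X ^ k) :=
  stmt_2_general f₁ f₂ g₁ g₂ n k hn hk hf₁0 hf₂0 hcop hg₂ heq
end

section
/- Let P, Q ∈ ℤ[t] be polynomials with P(0) = Q(0) = 1, and suppose Q(t) = q(t^k) · P(t) for some polynomial q ∈ ℤ[t] and integer k > 1. Then for every positive integer m not divisible by k, the power sums agree: if P(t) = Πᵢ(1 − αᵢt) and Q(t) = Πⱼ(1 − βⱼt) over ℂ, then Σⱼ βⱼ^m = Σᵢ αᵢ^m. -/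
/-!
Write `g = q(X^k)`, so that `Q = g P` in `ℂ⟦X⟧`. The logarithmic derivative `f⁻¹ f'` turns this
product into the sum `Q'/Q = g'/g + P'/P`. Since `(1 - aX)'/(1 - aX) = -∑ₙ aⁿ⁺¹ Xⁿ`, the coefficient
of `Xᵐ⁻¹` in `P'/P` is `-∑ αᵢᵐ`, and likewise for `Q`. Both `g` and `g⁻¹` only have coefficients
in degrees divisible by `k`, so `g'/g` vanishes in every degree `m - 1` with `k ∤ m`.
-/

open scoped PowerSeries

namespace PowerSeries

variable {K : Type*} [Field K]

noncomputable def logDeriv (f : K⟦X⟧) : K⟦X⟧ := f⁻¹ * d⁄dX K f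

theorem logDeriv_one : logDeriv (1 : K⟦X⟧) = 0 := by
  simp [logDeriv]

theorem logDeriv_mul {f g : K⟦X⟧} (hf : constantCoeff f ≠ 0) (hg : constantCoeff g ≠ 0) :
    logDeriv (f * g) = logDeriv f + logDeriv g := by
  have hf' : f⁻¹ * f = 1 := PowerSeries.inv_mul_cancel f hf
  have hg' : g⁻¹ * g = 1 := PowerSeries.inv_mul_cancel g hg
  calc logDeriv (f * g) = g⁻¹ * f⁻¹ * (f * d⁄dX K g + g * d⁄dX K f) := by
        rw [logDeriv, PowerSeries.mul_inv_rev, Derivation.leibniz, smul_eq_mul, smul_eq_mul]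
    _ = (f⁻¹ * f) * (g⁻¹ * d⁄dX K g) + (g⁻¹ * g) * (f⁻¹ * d⁄dX K f) := by ring
    _ = logDeriv f + logDeriv g := by rw [hf', hg', one_mul, one_mul, add_comm, logDeriv, logDeriv]

theorem logDeriv_prod {ι : Type*} (s : Finset ι) (f : ι → K⟦X⟧)
    (hf : ∀ i ∈ s, constantCoeff (f i) ≠ 0) :
    logDeriv (∏ i ∈ s, f i) = ∑ i ∈ s, logDeriv (f i) := by
  classical
  induction s using Finset.induction_on with
  | empty => simp [logDeriv_one]
  | insert a s ha ih =>
    rw [Finset.forall_mem_insert] at hf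
    have hs : constantCoeff (∏ i ∈ s, f i) ≠ 0 := by
      rw [map_prod]
      exact Finset.prod_ne_zero_iff.mpr hf.2
    rw [Finset.prod_insert ha, Finset.sum_insert ha, logDeriv_mul hf.1 hs, ih hf.2]

theorem inv_one_sub_C_mul_X (a : K) : (1 - C a * X)⁻¹ = mk fun n => a ^ n := by
  symm
  rw [PowerSeries.eq_inv_iff_mul_eq_one (by simp)]
  simpa [rescale_mk, rescale_X] using congrArg (rescale a) (mk_one_mul_one_sub_eq_one K)

theorem coeff_logDeriv_one_sub_C_mul_X (a : K) (n : ℕ) :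
    coeff n (logDeriv (1 - C a * X)) = -a ^ (n + 1) := by
  rw [logDeriv, inv_one_sub_C_mul_X]
  simp [coeff_mk, pow_succ]

variable {k : ℕ} {g : K⟦X⟧}

theorem coeff_inv_eq_zero_of_not_dvd (hg : ∀ n, ¬ k ∣ n → coeff n g = 0) {n : ℕ}
    (hn : ¬ k ∣ n) : coeff n g⁻¹ = 0 := by
  induction n using Nat.strong_induction_on with
  | _ n ih =>
    have hn0 : n ≠ 0 := by rintro rfl; exact hn (dvd_zero k)
    rw [coeff_inv, if_neg hn0, Finset.sum_eq_zero, mul_zero]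
    rintro ⟨i, j⟩ hij
    rw [Finset.HasAntidiagonal.mem_antidiagonal] at hij
    split_ifs with hj
    · by_cases hi : k ∣ i
      · rw [ih j hj fun hkj => hn (hij ▸ dvd_add hi hkj), mul_zero]
      · rw [hg i hi, zero_mul]
    · rfl

theorem coeff_logDeriv_eq_zero_of_not_dvd (hg : ∀ n, ¬ k ∣ n → coeff n g = 0) {n : ℕ}
    (hn : ¬ k ∣ n + 1) : coeff n (logDeriv g) = 0 := by
  rw [logDeriv, coeff_mul]
  refine Finset.sum_eq_zero fun ⟨i, j⟩ hij => ?_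
  rw [Finset.HasAntidiagonal.mem_antidiagonal] at hij
  by_cases hi : k ∣ i
  · have hj : ¬ k ∣ j + 1 := fun hj => hn (by rw [← hij, add_assoc]; exact dvd_add hi hj)
    rw [coeff_derivative, hg _ hj, zero_mul, mul_zero]
  · rw [coeff_inv_eq_zero_of_not_dvd hg hi, zero_mul]

theorem sum_pow_eq_of_prod_eq_mul {ι κ : Type*} [Fintype ι] [Fintype κ] (α : ι → K) (β : κ → K)
    (hg : ∀ n, ¬ k ∣ n → coeff n g = 0)
    (h : ∏ j, (1 - C (β j) * X) = g * ∏ i, (1 - C (α i) * X)) {m : ℕ} (hm : ¬ k ∣ m) :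
    ∑ j, β j ^ m = ∑ i, α i ^ m := by
  obtain ⟨n, rfl⟩ : ∃ n, m = n + 1 := Nat.exists_eq_add_one_of_ne_zero (by rintro rfl; simp at hm)
  have hfactor (a : K) : constantCoeff (1 - C a * X) = 1 := by simp
  have hP₀ : constantCoeff (∏ i, (1 - C (α i) * X)) = 1 := by simp [map_prod, hfactor]
  have hg₀ : constantCoeff g = 1 := by
    simpa [map_prod, hfactor] using (congrArg constantCoeff h).symm
  simpa only [logDeriv_mul (hg₀.trans_ne one_ne_zero) (hP₀.trans_ne one_ne_zero),
    map_add, coeff_logDeriv_eq_zero_of_not_dvd hg hm, zero_add,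
    logDeriv_prod _ _ fun i _ => (hfactor _).trans_ne one_ne_zero, map_sum,
    coeff_logDeriv_one_sub_C_mul_X, Finset.sum_neg_distrib, neg_inj]
    using congrArg (fun f => coeff n (logDeriv f)) h

end PowerSeries

open Polynomial

theorem Polynomial.coeff_comp_X_pow_eq_zero_of_not_dvd {R : Type*} [CommSemiring R] (q : R[X])
    {k n : ℕ} (hn : ¬ k ∣ n) : (q.comp (X ^ k)).coeff n = 0 := by
  rcases k.eq_zero_or_pos with rfl | hk
  · have hn0 : n ≠ 0 := by rintro rfl; simp at hn
    simp [coeff_C, hn0]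
  · rw [← expand_eq_comp_X_pow, coeff_expand hk, if_neg hn]

theorem stmt_6_general (P Q q : Polynomial ℤ) (k : ℕ)
    (hfac : Q = q.comp (X ^ k) * P)
    (r s : ℕ) (α : Fin r → ℂ) (β : Fin s → ℂ)
    (hPα : P.map (Int.castRingHom ℂ) = ∏ i, (1 - C (α i) * X))
    (hQβ : Q.map (Int.castRingHom ℂ) = ∏ j, (1 - C (β j) * X)) :
    ∀ m : ℕ, 0 < m → ¬ k ∣ m → ∑ j, β j ^ m = ∑ i, α i ^ m := by
  intro m _ hm
  let toPowerSeries : ℤ[X] →+* PowerSeries ℂ :=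
    coeToPowerSeries.ringHom.comp (mapRingHom (Int.castRingHom ℂ))
  refine PowerSeries.sum_pow_eq_of_prod_eq_mul α β (g := toPowerSeries (q.comp (X ^ k)))
    (fun n hn => ?_) ?_ hm
  · simp [toPowerSeries, coeff_comp_X_pow_eq_zero_of_not_dvd q hn]
  · have hcoe {n : ℕ} (γ : Fin n → ℂ) : coeToPowerSeries.ringHom (∏ i, (1 - C (γ i) * X)) =
        ∏ i, (1 - PowerSeries.C (γ i) * PowerSeries.X) := by
      simp [map_prod]
    simpa only [toPowerSeries, RingHom.comp_apply, coe_mapRingHom, map_mul, hPα, hQβ, hcoe]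
      using congrArg toPowerSeries hfac

theorem stmt_6 (P Q q : Polynomial ℤ) (k : ℕ) (hk : 1 < k)
    (hP0 : P.coeff 0 = 1) (hQ0 : Q.coeff 0 = 1)
    (hfac : Q = q.comp (X ^ k) * P)
    (r s : ℕ) (α : Fin r → ℂ) (β : Fin s → ℂ)
    (hPα : P.map (Int.castRingHom ℂ) = ∏ i, (1 - C (α i) * X))
    (hQβ : Q.map (Int.castRingHom ℂ) = ∏ j, (1 - C (β j) * X)) :
    ∀ m : ℕ, 0 < m → ¬ k ∣ m → ∑ j, β j ^ m = ∑ i, α i ^ m :=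
  stmt_6_general P Q q k hfac r s α β hPα hQβ
end

section
/- Let ζ_k be a primitive k-th root of unity and let f₁, f₂ ∈ ℂ[x] be coprime polynomials with f₁(0) ≠ 0, f₂(0) ≠ 0, satisfying f₁(x)·f₂(ζ_k x) = f₂(x)·f₁(ζ_k x). Then there exist polynomials h₁, h₂ ∈ ℂ[x] with f₁(x) = h₁(x^k) and f₂(x) = h₂(x^k). -/
/-!
Coprimality turns the functional equation into `f ∣ f(ζx)` for `f = f₁, f₂`. As `f(ζx)` has degree
at most that of `f`, the quotient is a constant, equal to `1` by evaluation at `0`; hence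
`f(ζx) = f(x)`. Comparing coefficients gives `ζⁿ aₙ = aₙ`, so `aₙ = 0` unless `k ∣ n`, i.e. `f` is a
polynomial in `xᵏ`.
-/

open Polynomial

namespace Polynomial

lemma expand_contract_of_coeff_eq_zero {R : Type*} [CommSemiring R] {f : R[X]} {k : ℕ}
    (hk : k ≠ 0) (hf : ∀ n, ¬ k ∣ n → f.coeff n = 0) : expand R k (contract k f) = f := by
  ext n
  rw [coeff_expand (Nat.pos_of_ne_zero hk), coeff_contract hk]
  split_ifs with h
  · rw [Nat.div_mul_cancel h]
  · exact (hf n h).symm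

variable {R : Type*} [CommRing R] [IsDomain R]

lemma comp_C_mul_X_eq_self_of_dvd {f : R[X]} {a : R} (hf0 : f.eval 0 ≠ 0)
    (hdvd : f ∣ f.comp (C a * X)) : f.comp (C a * X) = f := by
  obtain ⟨q, hq⟩ := hdvd
  have heval : (f.comp (C a * X)).eval 0 = f.eval 0 := by simp [eval_comp]
  have hf : f ≠ 0 := by rintro rfl; simp at hf0
  have hq0 : q ≠ 0 := by rintro rfl; simp [hq] at heval; exact hf0 heval.symm
  have hdeg : (f.comp (C a * X)).natDegree ≤ f.natDegree :=
    natDegree_le_iff_coeff_eq_zero.mpr fun n hn => by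
      rw [comp_C_mul_X_coeff, coeff_eq_zero_of_natDegree_lt hn, zero_mul]
  rw [hq, natDegree_mul hf hq0] at hdeg
  obtain ⟨c, rfl⟩ : ∃ c, q = C c := ⟨_, eq_C_of_natDegree_eq_zero (by omega)⟩
  have hc : c = 1 := by
    rw [hq, eval_mul, eval_C] at heval
    exact mul_eq_left₀ hf0 |>.mp heval
  rw [hq, hc, map_one, mul_one]

lemma coeff_eq_zero_of_comp_C_mul_X_eq_self {f : R[X]} {ζ : R} {k n : ℕ}
    (hζ : IsPrimitiveRoot ζ k) (hf : f.comp (C ζ * X) = f) (hn : ¬ k ∣ n) : f.coeff n = 0 := by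
  have hfix : f.coeff n * ζ ^ n = f.coeff n := by rw [← comp_C_mul_X_coeff, hf]
  have hζn : ζ ^ n ≠ 1 := fun h => hn (hζ.pow_eq_one_iff_dvd n |>.mp h)
  by_contra hne
  exact hζn ((mul_eq_left₀ hne).mp hfix)

lemma exists_eq_comp_X_pow_of_dvd_comp_C_mul_X {f : R[X]} {ζ : R} {k : ℕ} (hk : k ≠ 0)
    (hζ : IsPrimitiveRoot ζ k) (hf0 : f.eval 0 ≠ 0) (hdvd : f ∣ f.comp (C ζ * X)) :
    ∃ h : R[X], f = h.comp (X ^ k) := by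
  have hfix := comp_C_mul_X_eq_self_of_dvd hf0 hdvd
  refine ⟨contract k f, ?_⟩
  rw [← expand_eq_comp_X_pow, expand_contract_of_coeff_eq_zero hk
    fun n hn => coeff_eq_zero_of_comp_C_mul_X_eq_self hζ hfix hn]

end Polynomial

theorem stmt_16 (k : ℕ) (hk : 0 < k) (ζ : ℂ) (hζ : IsPrimitiveRoot ζ k)
    (f₁ f₂ : Polynomial ℂ) (hcop : IsCoprime f₁ f₂)
    (hf₁0 : f₁.eval 0 ≠ 0) (hf₂0 : f₂.eval 0 ≠ 0)
    (heq : f₁ * f₂.comp (C ζ * X) = f₂ * f₁.comp (C ζ * X)) :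
    ∃ h₁ h₂ : Polynomial ℂ, f₁ = h₁.comp (X ^ k) ∧ f₂ = h₂.comp (X ^ k) := by
  have hdvd₁ : f₁ ∣ f₁.comp (C ζ * X) :=
    hcop.dvd_of_dvd_mul_left ⟨f₂.comp (C ζ * X), heq.symm⟩
  have hdvd₂ : f₂ ∣ f₂.comp (C ζ * X) :=
    hcop.symm.dvd_of_dvd_mul_left ⟨f₁.comp (C ζ * X), heq⟩
  obtain ⟨h₁, rfl⟩ := exists_eq_comp_X_pow_of_dvd_comp_C_mul_X hk.ne' hζ hf₁0 hdvd₁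
  obtain ⟨h₂, rfl⟩ := exists_eq_comp_X_pow_of_dvd_comp_C_mul_X hk.ne' hζ hf₂0 hdvd₂
  exact ⟨h₁, h₂, rfl, rfl⟩
end
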